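/- In the sphere braid group B₄(S²), the identity (δ₂δ₃δ₂)² = ((δ₁δ₂)δ₁)⁻² holds; that is, the square of the half twist δ₂δ₃δ₂ equals the inverse of the square of the half twist ξ₃ = δ₁δ₂δ₁. -/

import Mathlib

/-- The relators of the sphere braid group `B₄(S²)`: the two braid relations, the
commutation relation, and the sphere relation `δ₁δ₂δ₃δ₃δ₂δ₁ = 1`. -/
def sphereBraidRel4 : Set (FreeGroup (Fin 3)) :=
  {FreeGroup.of 0 * FreeGroup.of 1 * FreeGroup.of 0 *
      (FreeGroup.of 1 * FreeGroup.of 0 * FreeGroup.of 1)⁻¹,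
   FreeGroup.of 1 * FreeGroup.of 2 * FreeGroup.of 1 *
      (FreeGroup.of 2 * FreeGroup.of 1 * FreeGroup.of 2)⁻¹,
   FreeGroup.of 0 * FreeGroup.of 2 * (FreeGroup.of 2 * FreeGroup.of 0)⁻¹,
   FreeGroup.of 0 * FreeGroup.of 1 * FreeGroup.of 2 *
      FreeGroup.of 2 * FreeGroup.of 1 * FreeGroup.of 0}

/-- The sphere braid group `B₄(S²)` on 4 strands. -/
abbrev SphereBraidGroup4 : Type := PresentedGroup sphereBraidRel4

/-- The standard generators `δ₁, δ₂, δ₃` of `B₄(S²)` (indexed by `0, 1, 2`). -/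
def δ (i : Fin 3) : SphereBraidGroup4 := PresentedGroup.of i

/-!
Both braid relations turn the square of a half twist into `(xyx)² = y x² y x²`. With the sphere
relation in its cyclically conjugated form `δ₁² δ₂ δ₃² δ₂ = 1`, the product
`(δ₁δ₂δ₁)² (δ₂δ₃δ₂)² = δ₂ δ₁² δ₂ δ₁² · δ₂ δ₃² δ₂ δ₃²` then collapses to `1`.
-/

section Group

variable {G : Type*} [Group G]

theorem sq_eq_of_braid {x y : G} (h : x * y * x = y * x * y) :
    (x * y * x) ^ 2 = y * x ^ 2 * y * x ^ 2 :=
  calc (x * y * x) ^ 2 = y * x * (y * x * y) * x := by rw [sq]; nth_rw 1 [h]; group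
    _ = y * x ^ 2 * y * x ^ 2 := by rw [← h]; simp only [sq, mul_assoc]

theorem sq_mul_sq_eq_one_of_braid_of_sphere {a b c : G} (hab : a * b * a = b * a * b)
    (hbc : b * c * b = c * b * c) (hsphere : a * b * c * c * b * a = 1) :
    (a * b * a) ^ 2 * (b * c * b) ^ 2 = 1 := by
  have hconj : a ^ 2 * b * c ^ 2 * b = 1 :=
    calc a ^ 2 * b * c ^ 2 * b = a * (a * b * c * c * b * a) * a⁻¹ := by simp only [sq]; group
      _ = 1 := by rw [hsphere]; group
  calc (a * b * a) ^ 2 * (b * c * b) ^ 2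
        = b * a ^ 2 * b * a ^ 2 * (b * c ^ 2 * b * c ^ 2) := by
          rw [sq_eq_of_braid hab, hbc, sq_eq_of_braid hbc.symm]
    _ = b * a ^ 2 * b * (a ^ 2 * b * c ^ 2 * b) * c ^ 2 := by simp only [mul_assoc]
    _ = b * a ^ 2 * b * c ^ 2 := by rw [hconj, mul_one]
    _ = b * (a ^ 2 * b * c ^ 2 * b) * b⁻¹ := by simp only [sq]; group
    _ = 1 := by rw [hconj]; group

end Group

theorem δ_braid_zero_one : δ 0 * δ 1 * δ 0 = δ 1 * δ 0 * δ 1 :=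
  PresentedGroup.mk_eq_mk_of_mul_inv_mem (by simp [sphereBraidRel4])

theorem δ_braid_one_two : δ 1 * δ 2 * δ 1 = δ 2 * δ 1 * δ 2 :=
  PresentedGroup.mk_eq_mk_of_mul_inv_mem (by simp [sphereBraidRel4])

theorem δ_sphere : δ 0 * δ 1 * δ 2 * δ 2 * δ 1 * δ 0 = 1 :=
  PresentedGroup.one_of_mem (by simp [sphereBraidRel4])

/-- In `B₄(S²)`, the square of the half twist `δ₂δ₃δ₂` is the inverse of the square
of the half twist `ξ₃ = δ₁δ₂δ₁`. -/
theorem halfTwist_sq_eq_inv :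
    (δ 1 * δ 2 * δ 1) ^ 2 = ((δ 0 * δ 1 * δ 0) ^ 2)⁻¹ :=
  eq_inv_of_mul_eq_one_right <|
    sq_mul_sq_eq_one_of_braid_of_sphere δ_braid_zero_one δ_braid_one_two δ_sphere
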